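/- The infinite sum of 1/(i^2 · binom(2i, i)) for i from 1 to infinity equals π²/18. -/

import Mathlib

/-!
Euler's Beta integral gives `1 / ((i+1)² C(2i+2, i+1)) = ∫₀¹ tⁱ (1-t)ⁱ⁺¹ / (i+1) dt`.
Summing under the integral, `∑ xⁱ⁺¹ / (i+1) = -log (1 - x)` at `x = t (1-t)`, and
`1 - t + t² = (1 + t³) / (1 + t)` turns the integrand into `(log (1+t) - log (1+t³)) / t`.
Expanding `log (1 + t^k)` termwise gives `∫₀¹ log (1 + t^k) / t dt = η(2) / k = π² / (12 k)`,
so the sum is `π²/12 - π²/36 = π²/18`.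
-/

open Real MeasureTheory
open scoped Nat

theorem integral_pow_mul_one_sub_pow (a b : ℕ) :
    ∫ x in (0:ℝ)..1, x ^ a * (1 - x) ^ b = (a ! * b ! / (a + b + 1)! : ℝ) := by
  have h := Complex.Gamma_mul_Gamma_eq_betaIntegral (s := a + 1) (t := b + 1)
    (by simp only [Complex.add_re, Complex.natCast_re, Complex.one_re]; positivity)
    (by simp only [Complex.add_re, Complex.natCast_re, Complex.one_re]; positivity)
  rw [Complex.betaIntegral,
    show (a : ℂ) + 1 + (b + 1) = ((a + b + 1 : ℕ) : ℂ) + 1 by push_cast; ring,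
    Complex.Gamma_nat_eq_factorial, Complex.Gamma_nat_eq_factorial,
    Complex.Gamma_nat_eq_factorial] at h
  simp only [add_sub_cancel_right, Complex.cpow_natCast] at h
  rw [eq_div_iff (by positivity)]
  apply Complex.ofReal_injective
  push_cast
  rw [h, ← intervalIntegral.integral_ofReal]
  push_cast
  ring

theorem integral_pow_mul_one_sub_pow_succ_div (i : ℕ) :
    ∫ x in (0:ℝ)..1, x ^ i * (1 - x) ^ (i + 1) / (i + 1)
      = 1 / (((i : ℝ) + 1) ^ 2 * (Nat.choose (2 * (i + 1)) (i + 1) : ℝ)) := by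
  rw [intervalIntegral.integral_div, integral_pow_mul_one_sub_pow,
    Nat.cast_choose ℝ (by omega : i + 1 ≤ 2 * (i + 1)),
    show 2 * (i + 1) - (i + 1) = i + 1 by omega, show i + (i + 1) + 1 = 2 * (i + 1) by ring,
    Nat.factorial_succ i]
  push_cast
  field_simp

theorem hasSum_one_div_succ_sq : HasSum (fun n : ℕ => 1 / ((n : ℝ) + 1) ^ 2) (π ^ 2 / 6) := by
  simpa using (hasSum_nat_add_iff' 1).mpr hasSum_zeta_two

theorem hasSum_neg_one_pow_div_succ_sq :
    HasSum (fun n : ℕ => (-1) ^ n / ((n : ℝ) + 1) ^ 2) (π ^ 2 / 12) := by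
  -- The odd-indexed terms of `ζ(2)` add up to `ζ(2) / 4`, so `η(2) = ζ(2) - 2 · ζ(2) / 4`.
  have hodd : HasSum (fun k : ℕ => 1 / (((2 * k + 1 : ℕ) : ℝ) + 1) ^ 2) (π ^ 2 / 6 / 4) := by
    refine (hasSum_one_div_succ_sq.div_const 4).congr_fun fun k => ?_
    push_cast; field_simp; ring
  obtain ⟨E, heven⟩ : Summable fun k : ℕ => 1 / (((2 * k : ℕ) : ℝ) + 1) ^ 2 :=
    hasSum_one_div_succ_sq.summable.comp_injective (mul_right_injective₀ two_ne_zero)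
  have hE : E + π ^ 2 / 6 / 4 = π ^ 2 / 6 :=
    (HasSum.even_add_odd (f := fun n : ℕ => 1 / ((n : ℝ) + 1) ^ 2) heven hodd).unique
      hasSum_one_div_succ_sq
  have hsigned_even : HasSum (fun k : ℕ => (-1) ^ (2 * k) / (((2 * k : ℕ) : ℝ) + 1) ^ 2) E :=
    heven.congr_fun fun k => by rw [pow_mul, neg_one_sq, one_pow]
  have hsigned_odd : HasSum (fun k : ℕ => (-1) ^ (2 * k + 1) / (((2 * k + 1 : ℕ) : ℝ) + 1) ^ 2)
      (-(π ^ 2 / 6 / 4)) :=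
    hodd.neg.congr_fun fun k => by rw [pow_succ, pow_mul, neg_one_sq, one_pow, one_mul, neg_div]
  convert HasSum.even_add_odd (f := fun n : ℕ => (-1) ^ n / ((n : ℝ) + 1) ^ 2)
    hsigned_even hsigned_odd using 1
  linarith

theorem summable_one_div_succ_sq_mul_choose :
    Summable fun i : ℕ => 1 / (((i : ℝ) + 1) ^ 2 * (Nat.choose (2 * (i + 1)) (i + 1) : ℝ)) := by
  refine hasSum_one_div_succ_sq.summable.of_nonneg_of_le (fun i => by positivity) fun i => ?_
  refine one_div_le_one_div_of_le (by positivity) (le_mul_of_one_le_right (by positivity) ?_)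
  exact_mod_cast Nat.choose_pos (by omega)

theorem hasSum_intervalIntegral_of_summable_integral_norm {ι E : Type*} [Countable ι]
    [NormedAddCommGroup E] [NormedSpace ℝ E] {a b : ℝ} (hab : a ≤ b) {F : ι → ℝ → E}
    {f : ℝ → E} (hF_int : ∀ i, IntervalIntegrable (F i) volume a b)
    (hF_sum : Summable fun i => ∫ t in a..b, ‖F i t‖)
    (hF : ∀ t ∈ Set.Ioo a b, HasSum (F · t) (f t)) :
    HasSum (fun i => ∫ t in a..b, F i t) (∫ t in a..b, f t) := by
  simp only [intervalIntegral.integral_of_le hab] at hF_sum ⊢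
  convert hasSum_integral_of_summable_integral_norm (fun i => (hF_int i).1) hF_sum using 1
  rw [integral_Ioc_eq_integral_Ioo, integral_Ioc_eq_integral_Ioo]
  exact setIntegral_congr_fun measurableSet_Ioo fun t ht => (hF t ht).tsum_eq.symm

theorem hasSum_log_one_add_pow_div {k : ℕ} (hk : 0 < k) {t : ℝ} (ht₀ : 0 < t) (ht₁ : t < 1) :
    HasSum (fun n : ℕ => (-1) ^ n * t ^ (k * (n + 1) - 1) / (n + 1)) (log (1 + t ^ k) / t) := by
  have hx : |-t ^ k| < 1 := by
    rw [abs_neg, abs_of_pos (by positivity)]; exact pow_lt_one₀ ht₀.le ht₁ hk.ne'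
  have h := (hasSum_pow_div_log_of_abs_lt_one hx).neg.div_const t
  rw [sub_neg_eq_add, neg_neg] at h
  refine h.congr_fun fun n => ?_
  obtain ⟨m, hm⟩ := Nat.exists_eq_add_one_of_ne_zero (by positivity : k * (n + 1) ≠ 0)
  rw [neg_pow (t ^ k), ← pow_mul, hm, Nat.add_sub_cancel, pow_succ t m]
  field_simp
  ring

theorem integral_pow_mul_succ_sub_one {k : ℕ} (hk : 0 < k) (n : ℕ) :
    ∫ t in (0:ℝ)..1, t ^ (k * (n + 1) - 1) = 1 / (k * (n + 1)) := by
  obtain ⟨m, hm⟩ := Nat.exists_eq_add_one_of_ne_zero (by positivity : k * (n + 1) ≠ 0)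
  have hm' : (m : ℝ) + 1 = k * (n + 1) := by exact_mod_cast hm.symm
  rw [hm, Nat.add_sub_cancel, integral_pow, hm']
  simp

theorem intervalIntegrable_log_one_add_pow_div {k : ℕ} (hk : 0 < k) :
    IntervalIntegrable (fun t => log (1 + t ^ k) / t) volume 0 1 := by
  rw [intervalIntegrable_iff_integrableOn_Ioc_of_le zero_le_one]
  have hmeas : Measurable fun t : ℝ => log (1 + t ^ k) / t := by fun_prop
  refine Measure.integrableOn_of_bounded (M := 1) measure_Ioc_lt_top.ne
    hmeas.aestronglyMeasurable ?_
  filter_upwards [ae_restrict_mem measurableSet_Ioc] with t ⟨ht₀, ht₁⟩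
  have hlog_nonneg : 0 ≤ log (1 + t ^ k) := log_nonneg (le_add_of_nonneg_right (by positivity))
  have hlog_le : log (1 + t ^ k) ≤ t := by
    linarith [log_le_sub_one_of_pos (by positivity : 0 < 1 + t ^ k),
      pow_le_of_le_one ht₀.le ht₁ hk.ne']
  rw [norm_of_nonneg (by positivity)]
  exact div_le_one_of_le₀ hlog_le ht₀.le

theorem integral_log_one_add_pow_div {k : ℕ} (hk : 0 < k) :
    ∫ t in (0:ℝ)..1, log (1 + t ^ k) / t = π ^ 2 / (12 * k) := by
  set G : ℕ → ℝ → ℝ := fun n t => (-1) ^ n * t ^ (k * (n + 1) - 1) / (n + 1)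
  have hG_integral (n : ℕ) : ∫ t in (0:ℝ)..1, G n t = (-1) ^ n / ((n : ℝ) + 1) ^ 2 / k := by
    simp only [G]
    rw [intervalIntegral.integral_div, intervalIntegral.integral_const_mul,
      integral_pow_mul_succ_sub_one hk]
    field_simp
  have hG_integral_norm (n : ℕ) :
      ∫ t in (0:ℝ)..1, ‖G n t‖ = 1 / ((n : ℝ) + 1) ^ 2 / k := by
    rw [intervalIntegral.integral_congr (g := fun t => t ^ (k * (n + 1) - 1) / (n + 1)),
      intervalIntegral.integral_div, integral_pow_mul_succ_sub_one hk]
    · field_simp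
    · intro t ht
      rw [Set.uIcc_of_le zero_le_one] at ht
      dsimp only [G]
      rw [norm_div, norm_mul, norm_pow, norm_neg, norm_one, one_pow, one_mul,
        norm_of_nonneg (pow_nonneg ht.1 _), norm_of_nonneg (by positivity)]
  have h := hasSum_intervalIntegral_of_summable_integral_norm zero_le_one (F := G)
    (fun n => (by fun_prop : Continuous (G n)).intervalIntegrable 0 1)
    (by simpa only [hG_integral_norm] using hasSum_one_div_succ_sq.summable.div_const k)
    (fun t ht => hasSum_log_one_add_pow_div hk ht.1 ht.2)
  simp only [hG_integral] at h
  rw [← div_div]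
  exact h.unique (hasSum_neg_one_pow_div_succ_sq.div_const _)

theorem hasSum_pow_mul_one_sub_pow_succ_div {t : ℝ} (ht₀ : 0 < t) (ht₁ : t < 1) :
    HasSum (fun i : ℕ => t ^ i * (1 - t) ^ (i + 1) / (i + 1))
      (log (1 + t) / t - log (1 + t ^ 3) / t) := by
  have hx : |t * (1 - t)| < 1 := by
    rw [abs_of_pos (by nlinarith)]; nlinarith
  have hlog : -log (1 - t * (1 - t)) = log (1 + t) - log (1 + t ^ 3) := by
    rw [show 1 + t ^ 3 = (1 + t) * (1 - t * (1 - t)) by ring,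
      log_mul (by positivity) (by nlinarith)]
    ring
  have h := (hasSum_pow_div_log_of_abs_lt_one hx).div_const t
  rw [hlog, sub_div] at h
  refine h.congr_fun fun i => ?_
  rw [mul_pow, pow_succ t]
  field_simp

theorem stmt_6 : (∑' i : ℕ, (1:ℝ) / (((i:ℝ)+1)^2 * ((Nat.choose (2*(i+1)) (i+1)) : ℝ))) = Real.pi^2 / 18 := by
  set F : ℕ → ℝ → ℝ := fun i t => t ^ i * (1 - t) ^ (i + 1) / (i + 1)
  have hF_integral_norm (i : ℕ) : ∫ t in (0:ℝ)..1, ‖F i t‖ = ∫ t in (0:ℝ)..1, F i t := by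
    refine intervalIntegral.integral_congr fun t ht => norm_of_nonneg ?_
    rw [Set.uIcc_of_le zero_le_one] at ht
    have : 0 ≤ 1 - t := sub_nonneg.mpr ht.2
    exact div_nonneg (mul_nonneg (pow_nonneg ht.1 _) (pow_nonneg this _)) (by positivity)
  have h := hasSum_intervalIntegral_of_summable_integral_norm zero_le_one (F := F)
    (fun i => (by fun_prop : Continuous (F i)).intervalIntegrable 0 1)
    (by simpa only [hF_integral_norm, F, integral_pow_mul_one_sub_pow_succ_div]
      using summable_one_div_succ_sq_mul_choose)
    (fun t ht => hasSum_pow_mul_one_sub_pow_succ_div ht.1 ht.2)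
  simp only [F, integral_pow_mul_one_sub_pow_succ_div] at h
  have hL₁ := intervalIntegrable_log_one_add_pow_div one_pos
  have hL₃ := intervalIntegrable_log_one_add_pow_div three_pos
  have hI₁ := integral_log_one_add_pow_div one_pos
  simp only [pow_one] at hL₁ hI₁
  rw [h.tsum_eq, intervalIntegral.integral_sub hL₁ hL₃, hI₁,
    integral_log_one_add_pow_div three_pos]
  push_cast
  ring
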